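/- arXiv:funct-an/9410002 — 5 statements merged into one kernel-verified Lean document; each statement's English description precedes it below -/
import Mathlib

section
/- Let (X,μ) be a measure space with μ(X) < ∞, let 1 ≤ r ≤ p < ∞, and let g : X → ℂ be a measurable function such that the pointwise product f·g belongs to L^r(X,μ) for every f ∈ L^p(X,μ). Then g ∈ L^q(X,μ), where q is determined by 1/p + 1/q = 1/r (with q = ∞ when p = r). -/
/-!
By the closed graph theorem, multiplication by `g` is a bounded operator `L^p → L^r`, say of
norm `C`. Testing this bound against `f = |g|^(q/p)` on the truncation sets `{|g| ≤ n}` (where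
everything is finite because `μ` is) gives `‖g 1_{|g| ≤ n}‖_q ≤ C`; letting `n → ∞` gives
`‖g‖_q ≤ C`. When `q = ∞`, testing against indicators of the sets `{|g| > t}` with `t > C`
shows that they are null.
-/

open MeasureTheory ENNReal Filter

lemma ENNReal.HolderTriple.mul_div_add_one {p q r : ℝ≥0∞} [HolderTriple p q r] (hr : r ≠ 0)
    (hq : q ≠ ∞) : r * (q / p + 1) = q := by
  have hrq : r ≤ q := HolderTriple.le q p r
  have hq0 : q ≠ 0 := (pos_iff_ne_zero.2 hr).trans_le hrq |>.ne'
  have h : q / p + 1 = q / r := by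
    rw [div_eq_mul_inv, div_eq_mul_inv, ← HolderTriple.inv_add_inv_eq_inv p q r, mul_add,
      ENNReal.mul_inv_cancel hq0 hq]
  rw [h, ENNReal.mul_div_cancel hr (ne_top_of_le_ne_top hq hrq)]

section

variable {X 𝕜 : Type*} [MeasurableSpace X] {μ : Measure X} [RCLike 𝕜] {p r : ℝ≥0∞} {g : X → 𝕜}

namespace MeasureTheory.Lp

noncomputable def mulRightOfMemLp
    (hmul : ∀ f : X → 𝕜, MemLp f p μ → MemLp (fun x => f x * g x) r μ) :
    Lp 𝕜 p μ →ₗ[𝕜] Lp 𝕜 r μ where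
  toFun f := (hmul f (Lp.memLp f)).toLp _
  map_add' f f' := by
    refine Lp.ext ?_
    filter_upwards [MemLp.coeFn_toLp (hmul _ (Lp.memLp (f + f'))), Lp.coeFn_add f f',
      Lp.coeFn_add ((hmul f (Lp.memLp f)).toLp _) ((hmul f' (Lp.memLp f')).toLp _),
      MemLp.coeFn_toLp (hmul f (Lp.memLp f)), MemLp.coeFn_toLp (hmul f' (Lp.memLp f'))]
      with x h h_add h_add' hf hf'
    simp only [h, h_add, h_add', hf, hf', Pi.add_apply, add_mul]
  map_smul' c f := by
    refine Lp.ext ?_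
    filter_upwards [MemLp.coeFn_toLp (hmul _ (Lp.memLp (c • f))), Lp.coeFn_smul c f,
      Lp.coeFn_smul c ((hmul f (Lp.memLp f)).toLp _), MemLp.coeFn_toLp (hmul f (Lp.memLp f))]
      with x h h_smul h_smul' hf
    simp only [h, h_smul, h_smul', hf, Pi.smul_apply, smul_eq_mul, RingHom.id_apply, mul_assoc]

variable (hmul : ∀ f : X → 𝕜, MemLp f p μ → MemLp (fun x => f x * g x) r μ)

lemma coeFn_mulRightOfMemLp (f : Lp 𝕜 p μ) :
    mulRightOfMemLp hmul f =ᵐ[μ] fun x => f x * g x :=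
  MemLp.coeFn_toLp (hmul _ (Lp.memLp f))

lemma continuous_mulRightOfMemLp [Fact (1 ≤ p)] [Fact (1 ≤ r)] :
    Continuous (mulRightOfMemLp hmul) := by
  refine (mulRightOfMemLp hmul).continuous_of_seq_closed_graph fun u f y hu hTu => Lp.ext ?_
  obtain ⟨ns, hns, hu_ae⟩ := (tendstoInMeasure_of_tendsto_Lp hu).exists_seq_tendsto_ae
  obtain ⟨ms, hms, hTu_ae⟩ :=
    (tendstoInMeasure_of_tendsto_Lp (hTu.comp hns.tendsto_atTop)).exists_seq_tendsto_ae
  have hT : ∀ᵐ x ∂μ, ∀ n, mulRightOfMemLp hmul (u n) x = u n x * g x :=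
    ae_all_iff.2 fun n => coeFn_mulRightOfMemLp hmul (u n)
  filter_upwards [hu_ae, hTu_ae, hT, coeFn_mulRightOfMemLp hmul f] with x hux hTux hTx hTf
  rw [hTf]
  refine tendsto_nhds_unique hTux ?_
  simp only [Function.comp_apply, hTx]
  exact (hux.comp hms.tendsto_atTop).mul_const (g x)

end MeasureTheory.Lp

theorem exists_eLpNorm_mul_le_of_forall_memLp_mul (hp : 1 ≤ p) (hr : 1 ≤ r)
    (hmul : ∀ f : X → 𝕜, MemLp f p μ → MemLp (fun x => f x * g x) r μ) :
    ∃ C ≠ ∞, ∀ f : X → 𝕜, MemLp f p μ →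
      eLpNorm (fun x => f x * g x) r μ ≤ C * eLpNorm f p μ := by
  have : Fact (1 ≤ p) := ⟨hp⟩
  have : Fact (1 ≤ r) := ⟨hr⟩
  let T : Lp 𝕜 p μ →L[𝕜] Lp 𝕜 r μ := ⟨_, Lp.continuous_mulRightOfMemLp hmul⟩
  refine ⟨‖T‖ₑ, enorm_ne_top, fun f hf => ?_⟩
  have hTf : T (hf.toLp f) =ᵐ[μ] fun x => f x * g x := by
    filter_upwards [Lp.coeFn_mulRightOfMemLp hmul (hf.toLp f), hf.coeFn_toLp]
      with x hTx hfx
    rw [← hfx, ← hTx]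
    rfl
  calc eLpNorm (fun x => f x * g x) r μ = ‖T (hf.toLp f)‖ₑ := by
        rw [Lp.enorm_def, eLpNorm_congr_ae hTf]
    _ ≤ ‖T‖ₑ * ‖hf.toLp f‖ₑ := T.le_opENorm _
    _ = ‖T‖ₑ * eLpNorm f p μ := by rw [Lp.enorm_def, eLpNorm_congr_ae hf.coeFn_toLp]

variable {q : ℝ≥0∞} {C : ℝ≥0∞}

lemma eLpNorm_indicator_le_of_forall_eLpNorm_mul_le [ENNReal.HolderTriple p q r] (hp : p ≠ ∞)
    (hq : q ≠ ∞) (hr : r ≠ 0) {S : Set X} (hgS : MemLp (S.indicator g) q μ)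
    (hC : ∀ f : X → 𝕜, MemLp f p μ → eLpNorm (fun x => f x * g x) r μ ≤ C * eLpNorm f p μ) :
    eLpNorm (S.indicator g) q μ ≤ C := by
  have hp0 : p ≠ 0 := ((pos_iff_ne_zero.2 hr).trans_le (ENNReal.HolderTriple.le p q r)).ne'
  have hq0 : q ≠ 0 := ((pos_iff_ne_zero.2 hr).trans_le (ENNReal.HolderTriple.le q p r)).ne'
  set h := S.indicator g
  set N := eLpNorm h q μ
  -- test against `f = |h|^(q/p)`, for which `|f g| = |h|^(q/r)`
  set s := (q / p).toReal
  have hs : ENNReal.ofReal s = q / p := ofReal_toReal (ENNReal.div_ne_top hq hp0)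
  have hs0 : 0 < s := ENNReal.toReal_pos (ENNReal.div_pos hq0 hp).ne' (ENNReal.div_ne_top hq hp0)
  set f : X → 𝕜 := fun x => ((‖h x‖ ^ s : ℝ) : 𝕜)
  have hf : MemLp f p μ := by
    have hf_real := hgS.norm_rpow_div (q / p)
    rw [ENNReal.div_div_cancel hq0 hq] at hf_real
    exact hf_real.ofReal
  have hf_norm : eLpNorm f p μ = N ^ s :=
    calc eLpNorm f p μ = eLpNorm (fun x => ‖h x‖ ^ s) p μ :=
          eLpNorm_congr_norm_ae <| ae_of_all _ fun x => by
            rw [RCLike.norm_ofReal, Real.norm_eq_abs]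
      _ = eLpNorm h (p * ENNReal.ofReal s) μ ^ s := eLpNorm_norm_rpow h hs0
      _ = N ^ s := by rw [hs, ENNReal.mul_div_cancel hp0 hp]
  have hfg_norm : eLpNorm (fun x => f x * g x) r μ = N ^ (s + 1) :=
    calc eLpNorm (fun x => f x * g x) r μ = eLpNorm (fun x => ‖h x‖ ^ (s + 1)) r μ := by
          refine eLpNorm_congr_norm_ae <| ae_of_all _ fun x => ?_
          by_cases hx : x ∈ S
          · simp [f, h, hx, Real.rpow_add_one' (norm_nonneg _) (by positivity : s + 1 ≠ 0)]
          · simp [f, h, hx, Real.zero_rpow hs0.ne', Real.zero_rpow (by positivity : s + 1 ≠ 0)]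
      _ = eLpNorm h (r * ENNReal.ofReal (s + 1)) μ ^ (s + 1) :=
          eLpNorm_norm_rpow h (by positivity)
      _ = N ^ (s + 1) := by
          rw [ENNReal.ofReal_add hs0.le zero_le_one, hs, ENNReal.ofReal_one,
            ENNReal.HolderTriple.mul_div_add_one hr hq]
  have hN : N ≠ ∞ := hgS.eLpNorm_ne_top
  rcases eq_or_ne N 0 with hN0 | hN0
  · simp [hN0]
  have hNC := hC f hf
  rw [hf_norm, hfg_norm, ENNReal.rpow_add _ _ hN0 hN, ENNReal.rpow_one, mul_comm] at hNC
  refine (ENNReal.mul_le_mul_iff_left ?_ (ENNReal.rpow_ne_top_of_nonneg hs0.le hN)).1 hNC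
  simp [ENNReal.rpow_eq_zero_iff, hN0, hN]

lemma eLpNorm_top_le_of_forall_eLpNorm_mul_le [IsFiniteMeasure μ] (hp : p ≠ 0)
    (hg : Measurable g)
    (hC : ∀ f : X → 𝕜, MemLp f p μ → eLpNorm (fun x => f x * g x) p μ ≤ C * eLpNorm f p μ) :
    eLpNorm g ∞ μ ≤ C := by
  rw [eLpNorm_exponent_top]
  refine le_of_forall_gt_imp_ge_of_dense fun t ht => essSup_le_of_ae_le t ?_
  set A := {x | t < ‖g x‖ₑ}
  suffices μ A = 0 from ae_iff.2 (by simpa only [not_le] using this)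
  by_contra hA
  have hAm : MeasurableSet A := measurableSet_lt measurable_const hg.enorm
  have h1A : MemLp (A.indicator fun _ => (1 : 𝕜)) p μ :=
    memLp_indicator_const p hAm 1 (Or.inr (measure_ne_top μ A))
  set m := μ A ^ (1 / p.toReal)
  have hm0 : m ≠ 0 := by simp [m, ENNReal.rpow_eq_zero_iff, hA, measure_ne_top]
  have hm : m ≠ ∞ := ENNReal.rpow_ne_top_of_nonneg (by positivity) (measure_ne_top μ A)
  have htC : t * m ≤ C * m :=
    calc t * m = eLpNorm (A.indicator fun _ => t) p μ := by
          rw [eLpNorm_indicator_const' hAm hA hp, enorm_eq_self]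
      _ ≤ eLpNorm (fun x => A.indicator (fun _ => (1 : 𝕜)) x * g x) p μ :=
          eLpNorm_mono_enorm fun x => by
            by_cases hx : x ∈ A
            · simpa [hx] using (le_of_lt hx : t ≤ ‖g x‖ₑ)
            · simp [hx]
      _ ≤ C * eLpNorm (A.indicator fun _ => (1 : 𝕜)) p μ := hC _ h1A
      _ = C * m := by rw [eLpNorm_indicator_const' hAm hA hp, enorm_one, one_mul]
  exact ht.not_ge ((ENNReal.mul_le_mul_iff_left hm0 hm).1 htC)

theorem eLpNorm_le_of_forall_eLpNorm_mul_le [IsFiniteMeasure μ] [ENNReal.HolderTriple p q r]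
    (hp : p ≠ ∞) (hr : r ≠ 0) (hg : Measurable g)
    (hC : ∀ f : X → 𝕜, MemLp f p μ → eLpNorm (fun x => f x * g x) r μ ≤ C * eLpNorm f p μ) :
    eLpNorm g q μ ≤ C := by
  rcases eq_or_ne q ∞ with rfl | hq
  · obtain rfl : r = p := ENNReal.HolderTriple.unique p ∞ r p
    exact eLpNorm_top_le_of_forall_eLpNorm_mul_le hr hg hC
  set S : ℕ → Set X := fun n => {x | ‖g x‖ ≤ n}
  have hS (n : ℕ) : MeasurableSet (S n) := measurableSet_le hg.norm measurable_const
  have hgS (n : ℕ) : MemLp ((S n).indicator g) q μ := by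
    refine MemLp.of_bound (hg.aestronglyMeasurable.indicator (hS n)) n (ae_of_all _ fun x => ?_)
    by_cases hx : x ∈ S n
    · rw [Set.indicator_of_mem hx]
      exact hx
    · simp [hx]
  refine Lp.eLpNorm_le_of_ae_tendsto (u := atTop)
    (Eventually.of_forall fun n =>
      eLpNorm_indicator_le_of_forall_eLpNorm_mul_le hp hq hr (hgS n) hC)
    (fun n => (hgS n).1) (ae_of_all _ fun x => ?_)
  obtain ⟨n, hn⟩ := exists_nat_ge ‖g x‖
  refine tendsto_const_nhds.congr' (eventually_atTop.2 ⟨n, fun m hm => ?_⟩)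
  have hx : x ∈ S m := hn.trans (Nat.cast_le.2 hm)
  exact (Set.indicator_of_mem hx g).symm

end

theorem lp_multiplier_mem_Lq_general
    {X : Type*} [MeasurableSpace X] (μ : Measure X) [IsFiniteMeasure μ]
    (p r q : ℝ≥0∞) (hr : 1 ≤ r) (hp : p ≠ ∞)
    (hq : 1 / p + 1 / q = 1 / r)
    (g : X → ℂ) (hg : Measurable g)
    (hmul : ∀ f : X → ℂ, MemLp f p μ → MemLp (fun x => f x * g x) r μ) :
    MemLp g q μ := by
  have : ENNReal.HolderTriple p q r := ⟨by simpa only [one_div] using hq⟩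
  obtain ⟨C, hC, hmul_le⟩ :=
    exists_eLpNorm_mul_le_of_forall_memLp_mul (hr.trans (ENNReal.HolderTriple.le p q r)) hr hmul
  refine ⟨hg.aestronglyMeasurable, ?_⟩
  exact (eLpNorm_le_of_forall_eLpNorm_mul_le hp (zero_lt_one.trans_le hr).ne' hg hmul_le).trans_lt
    hC.lt_top

/-- Let `(X, μ)` be a measure space with `μ X < ∞`, let
`1 ≤ r ≤ p < ∞`, and let `g : X → ℂ` be measurable such that `f * g ∈ L^r`
for every `f ∈ L^p`. Then `g ∈ L^q` where `1/p + 1/q = 1/r`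
(with `q = ∞` when `p = r`). -/
theorem lp_multiplier_mem_Lq
    {X : Type*} [MeasurableSpace X] (μ : Measure X) [IsFiniteMeasure μ]
    (p r q : ℝ≥0∞) (hr : 1 ≤ r) (hrp : r ≤ p) (hp : p ≠ ∞)
    (hq : 1 / p + 1 / q = 1 / r)
    (g : X → ℂ) (hg : Measurable g)
    (hmul : ∀ f : X → ℂ, MemLp f p μ → MemLp (fun x => f x * g x) r μ) :
    MemLp g q μ :=
  lp_multiplier_mem_Lq_general μ p r q hr hp hq g hg hmul
end

section
/- Let (X,μ) be a σ-finite measure space (μ(X) not necessarily finite), let 1 ≤ p < ∞, and let g : X → ℂ be a measurable function such that the pointwise product f·g belongs to L^1(X,μ) for every f ∈ L^p(X,μ). Then g ∈ L^{p'}(X,μ), where 1/p + 1/p' = 1 (p' = ∞ when p = 1). -/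
/-!
The truncations `g_n` of `g` to the `n`-th spanning set of `μ` and to `{‖g‖ ≤ n}` lie in every
`L^q`. The multiplication operators `F ↦ F g_n : L^p → L^1` are pointwise bounded by `‖F g‖₁`,
so by Banach–Steinhaus their norms are bounded by a single `C`. Testing against the extremal
functions of Hölder's inequality (`‖g_n‖ ^ (p' - 1)`, or indicators of sets where `‖g_n‖` is
large when `p' = ∞`) gives `‖g_n‖_{p'} ≤ C`, and Fatou's lemma passes the bound to `g`.
-/

open MeasureTheory ENNReal Filter Topology

section

variable {X 𝕜 E : Type*} [MeasurableSpace X] {μ : Measure X} [RCLike 𝕜] [NormedAddCommGroup E]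

section Truncation

variable [SigmaFinite μ] {g : X → E}

noncomputable def spanningTruncation (μ : Measure X) [SigmaFinite μ] (g : X → E) (n : ℕ) :
    X → E :=
  (spanningSets μ n ∩ {x | ‖g x‖ ≤ n}).indicator g

theorem norm_spanningTruncation_le (n : ℕ) (x : X) : ‖spanningTruncation μ g n x‖ ≤ ‖g x‖ :=
  norm_indicator_le_norm_self g x

theorem tendsto_spanningTruncation (x : X) :
    Tendsto (fun n => spanningTruncation μ g n x) atTop (𝓝 (g x)) := by
  refine tendsto_const_nhds.congr' ?_
  filter_upwards [eventually_ge_atTop (spanningSetsIndex μ x),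
    eventually_ge_atTop ⌈‖g x‖⌉₊] with n hn hgn
  have hx : x ∈ spanningSets μ n ∩ {x | ‖g x‖ ≤ n} :=
    ⟨monotone_spanningSets μ hn (mem_spanningSetsIndex μ x),
      (Nat.le_ceil _).trans (Nat.cast_le.mpr hgn)⟩
  exact (Set.indicator_of_mem hx g).symm

variable (hg : StronglyMeasurable g)
include hg

theorem measurableSet_spanningSets_inter_norm_le (n : ℕ) :
    MeasurableSet (spanningSets μ n ∩ {x | ‖g x‖ ≤ n}) :=
  (measurableSet_spanningSets μ n).inter (measurableSet_le hg.norm.measurable measurable_const)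

theorem stronglyMeasurable_spanningTruncation (n : ℕ) :
    StronglyMeasurable (spanningTruncation μ g n) :=
  hg.indicator (measurableSet_spanningSets_inter_norm_le hg n)

theorem memLp_spanningTruncation (q : ℝ≥0∞) (n : ℕ) : MemLp (spanningTruncation μ g n) q μ := by
  refine (memLp_indicator_const q (measurableSet_spanningSets_inter_norm_le hg n) (n : ℝ)
    (Or.inr (measure_inter_lt_top_of_left_ne_top (measure_spanningSets_lt_top μ n).ne).ne)).of_le
    (stronglyMeasurable_spanningTruncation hg n).aestronglyMeasurable (.of_forall fun x => ?_)
  by_cases hx : x ∈ spanningSets μ n ∩ {x | ‖g x‖ ≤ n}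
  · simpa [spanningTruncation, hx] using hx.2
  · simp [spanningTruncation, hx]

end Truncation

section ConverseHolder

theorem eLpNorm_le_of_forall_lintegral_enorm_mul_le {p q : ℝ≥0∞} [p.HolderConjugate q]
    (hp : p ≠ ∞) (hq : q ≠ ∞) {b : X → E} (hb : MemLp b q μ) {C : ℝ≥0∞}
    (hC : ∀ f : X → 𝕜, MemLp f p μ → ∫⁻ x, ‖f x‖ₑ * ‖b x‖ₑ ∂μ ≤ C * eLpNorm f p μ) :
    eLpNorm b q μ ≤ C := by
  have hp0 : p ≠ 0 := HolderConjugate.ne_zero p q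
  have hq0 : q ≠ 0 := HolderConjugate.ne_zero q p
  have hreal : p.toReal.HolderConjugate q.toReal := by
    simpa using HolderTriple.toReal 1 (toReal_pos hp0 hp) (toReal_pos hq0 hq)
  set r := q.toReal
  set I := ∫⁻ x, ‖b x‖ₑ ^ r ∂μ
  have hbI : eLpNorm b q μ = I ^ r⁻¹ := by
    rw [eLpNorm_eq_lintegral_rpow_enorm_toReal hq0 hq, one_div]
  have hI : I ≠ ∞ := by
    intro h
    simpa [hbI, h, hreal.symm.pos] using hb.eLpNorm_lt_top
  -- `f = ‖b‖ ^ (q - 1)` is the equality case of Hölder's inequality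
  set f : X → 𝕜 := fun x => ((‖b x‖ ^ (r - 1) : ℝ) : 𝕜)
  have hf_enorm (x : X) : ‖f x‖ₑ = ‖b x‖ₑ ^ (r - 1) := by
    rw [← ofReal_norm, RCLike.norm_ofReal, abs_of_nonneg (by positivity),
      ← ofReal_rpow_of_nonneg (norm_nonneg _) hreal.symm.sub_one_pos.le, ofReal_norm]
  have hfI : eLpNorm f p μ = I ^ p.toReal⁻¹ := by
    simp_rw [eLpNorm_eq_lintegral_rpow_enorm_toReal hp0 hp, one_div, hf_enorm, ← rpow_mul,
      hreal.symm.sub_one_mul_conj]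
    rfl
  have hf : MemLp f p μ := by
    refine ⟨?_, ?_⟩
    · exact (RCLike.continuous_ofReal.comp (Real.continuous_rpow_const
        hreal.symm.sub_one_pos.le)).comp_aestronglyMeasurable hb.1.norm
    · rw [hfI]
      exact rpow_lt_top_of_nonneg (by simp [hreal.pos.le]) hI
  have hfb : ∫⁻ x, ‖f x‖ₑ * ‖b x‖ₑ ∂μ = I := by
    congr 1 with x
    rw [hf_enorm]
    nth_rw 2 [← rpow_one ‖b x‖ₑ]
    rw [← rpow_add_of_nonneg _ _ hreal.symm.sub_one_pos.le zero_le_one, sub_add_cancel]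
  have hIC := hC f hf
  rw [hfb, hfI] at hIC
  rcases eq_or_ne I 0 with h0 | h0
  · simp [hbI, h0, hreal.symm.pos]
  have hsplit : I = I ^ p.toReal⁻¹ * I ^ r⁻¹ := by
    rw [← rpow_add _ _ h0 hI, hreal.inv_add_inv_eq_one, rpow_one]
  have hIp0 : I ^ p.toReal⁻¹ ≠ 0 := by simp [h0, hI]
  have hIp_top : I ^ p.toReal⁻¹ ≠ ∞ := by simp [h0, hI]
  rw [hbI, ← ENNReal.mul_le_mul_iff_right hIp0 hIp_top, ← hsplit, mul_comm]
  exact hIC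

theorem eLpNorm_top_le_of_forall_lintegral_enorm_mul_le [SigmaFinite μ] {b : X → E}
    (hb : StronglyMeasurable b) {C : ℝ≥0∞}
    (hC : ∀ f : X → 𝕜, MemLp f 1 μ → ∫⁻ x, ‖f x‖ₑ * ‖b x‖ₑ ∂μ ≤ C * eLpNorm f 1 μ) :
    eLpNorm b ∞ μ ≤ C := by
  by_contra! hlt
  obtain ⟨t, hCt, htb⟩ := exists_between hlt
  have hs : MeasurableSet {x | t < ‖b x‖ₑ} := measurableSet_lt measurable_const hb.enorm
  have hs0 : 0 < μ {x | t < ‖b x‖ₑ} := by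
    refine pos_iff_ne_zero.mpr fun h => htb.not_ge ?_
    refine eLpNormEssSup_le_of_ae_enorm_bound (measure_eq_zero_iff_ae_notMem.mp h |>.mono ?_)
    simp
  obtain ⟨u, hu, hus, hu0, hu_top⟩ := Measure.exists_subset_measure_lt_top hs hs0
  have hf : MemLp (u.indicator fun _ => (1 : 𝕜)) 1 μ :=
    memLp_indicator_const 1 hu 1 (Or.inr hu_top.ne)
  have hfb : ∫⁻ x, ‖u.indicator (fun _ => (1 : 𝕜)) x‖ₑ * ‖b x‖ₑ ∂μ =
      ∫⁻ x in u, ‖b x‖ₑ ∂μ := by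
    rw [← lintegral_indicator hu]
    congr 1 with x
    by_cases hx : x ∈ u <;> simp [hx]
  have hf1 : eLpNorm (u.indicator fun _ => (1 : 𝕜)) 1 μ = μ u := by
    simp [eLpNorm_indicator_const hu one_ne_zero one_ne_top]
  have htC : t * μ u ≤ C * μ u :=
    calc t * μ u = ∫⁻ _ in u, t ∂μ := (setLIntegral_const u t).symm
      _ ≤ ∫⁻ x in u, ‖b x‖ₑ ∂μ := setLIntegral_mono hb.enorm fun x hx => (hus hx).le
      _ ≤ C * μ u := hfb ▸ hf1 ▸ hC _ hf
  exact hCt.not_ge ((ENNReal.mul_le_mul_iff_left hu0.ne' hu_top.ne).mp htC)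

end ConverseHolder

variable [NormedSpace 𝕜 E] in
theorem exists_lintegral_enorm_mul_le_of_forall_memLp_smul {p q : ℝ≥0∞} [Fact (1 ≤ p)]
    [p.HolderConjugate q] {ι : Type*} {g : X → E} {b : ι → X → E}
    (hb : ∀ i, MemLp (b i) q μ) (hbg : ∀ i x, ‖b i x‖ ≤ ‖g x‖)
    (hg : ∀ f : X → 𝕜, MemLp f p μ → MemLp (fun x => f x • g x) 1 μ) :
    ∃ C < ∞, ∀ i, ∀ f : X → 𝕜, MemLp f p μ →
      ∫⁻ x, ‖f x‖ₑ * ‖b i x‖ₑ ∂μ ≤ C * eLpNorm f p μ := by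
  have : Fact (1 ≤ q) := ⟨HolderConjugate.one_le q p⟩
  let T : ι → Lp 𝕜 p μ →L[𝕜] Lp E 1 μ := fun i =>
    ((ContinuousLinearMap.lsmul 𝕜 𝕜).holderL μ p q 1).flip ((hb i).toLp (b i))
  have hT (i : ι) (F : Lp 𝕜 p μ) : ‖T i F‖ₑ = ∫⁻ x, ‖F x‖ₑ * ‖b i x‖ₑ ∂μ := by
    rw [Lp.enorm_def, eLpNorm_one_eq_lintegral_enorm]
    refine lintegral_congr_ae ?_
    filter_upwards [(ContinuousLinearMap.lsmul 𝕜 𝕜).coeFn_holder (r := 1) F ((hb i).toLp (b i)),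
      (hb i).coeFn_toLp] with x hx hbx
    simp [T, hx, hbx, enorm_smul]
  have hT_bdd : ⨆ i, ‖T i‖ₑ < ∞ := by
    refine banach_steinhaus_iSup_nnnorm fun F => ?_
    refine lt_of_le_of_lt (iSup_le fun i => ?_) (hg F (Lp.memLp F)).eLpNorm_lt_top
    rw [eLpNorm_one_eq_lintegral_enorm]
    refine (hT i F).trans_le (lintegral_mono fun x => ?_)
    rw [enorm_smul]
    gcongr
    exact enorm_le_iff_norm_le.mpr (hbg i x)
  refine ⟨_, hT_bdd, fun i f hf => ?_⟩
  calc ∫⁻ x, ‖f x‖ₑ * ‖b i x‖ₑ ∂μ = ‖T i (hf.toLp f)‖ₑ := by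
        rw [hT]
        refine lintegral_congr_ae ?_
        filter_upwards [hf.coeFn_toLp] with x hx
        rw [hx]
    _ ≤ ‖T i‖ₑ * ‖hf.toLp f‖ₑ := (T i).le_opENorm _
    _ ≤ (⨆ i, ‖T i‖ₑ) * eLpNorm f p μ := by
        rw [Lp.enorm_toLp]
        gcongr
        exact le_iSup (fun i => ‖T i‖ₑ) i

end

/-- Let `(X, μ)` be σ-finite, `1 ≤ p < ∞`, and `g : X → ℂ`
measurable such that `f·g ∈ L^1` for all `f ∈ L^p`. Then `g ∈ L^{p'}`, where
`1/p + 1/p' = 1` (`p' = ∞` when `p = 1`). -/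
theorem l1_multiplier_mem_dual_exponent
    {X : Type*} [MeasurableSpace X] (μ : Measure X) [SigmaFinite μ]
    (p p' : ℝ≥0∞) (hp : 1 ≤ p) (hp_top : p ≠ ∞)
    (hconj : 1 / p + 1 / p' = 1)
    (g : X → ℂ) (hg : Measurable g)
    (hmul : ∀ f : X → ℂ, MemLp f p μ → MemLp (fun x => f x * g x) 1 μ) :
    MemLp g p' μ := by
  have : Fact (1 ≤ p) := ⟨hp⟩
  have : p.HolderConjugate p' := holderConjugate_iff.mpr (by simpa only [one_div] using hconj)
  have hgs := hg.stronglyMeasurable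
  obtain ⟨C, hC_top, hC⟩ := exists_lintegral_enorm_mul_le_of_forall_memLp_smul
    (memLp_spanningTruncation (μ := μ) hgs p') norm_spanningTruncation_le hmul
  have hbound (n : ℕ) : eLpNorm (spanningTruncation μ g n) p' μ ≤ C := by
    rcases eq_or_ne p' ∞ with rfl | hp'
    · obtain rfl : p = 1 := (HolderConjugate.eq_top_iff_eq_one ∞ p).mp rfl
      exact eLpNorm_top_le_of_forall_lintegral_enorm_mul_le
        (stronglyMeasurable_spanningTruncation hgs n) (hC n)
    · exact eLpNorm_le_of_forall_lintegral_enorm_mul_le hp_top hp'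
        (memLp_spanningTruncation hgs p' n) (hC n)
  refine ⟨hg.aestronglyMeasurable, lt_of_le_of_lt ?_ hC_top⟩
  exact Lp.eLpNorm_le_of_ae_tendsto (.of_forall hbound)
    (fun n => (memLp_spanningTruncation hgs p' n).1) (.of_forall tendsto_spanningTruncation)
end

section
/- Let p ≥ 2. If f ∈ L^p(X,μ) satisfies Ω(f,f) = 0 for every Ω ∈ S(L^p(X,μ)), then f = 0 (as an element of L^p). That is, the pair (L^p(X,μ), C(X)) is *-semisimple. -/
open MeasureTheory ENNReal Complex
open scoped ComplexOrder

/-- The set `S(L^p)` of sesquilinear forms on `L^p(X,μ)`: `Ω` is linear in the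
first variable, conjugate-linear in the second, positive (`Ω(f,f) ≥ 0`),
invariant (`Ω(f·φ, ψ) = Ω(φ, f̄·ψ)` for continuous `φ, ψ`), and bounded
(`|Ω(f,g)| ≤ ‖f‖_p ‖g‖_p`). -/
def IsSform {X : Type*} [MeasurableSpace X] [TopologicalSpace X]
    (μ : Measure X) (p : ℝ≥0∞)
    (Ω : Lp ℂ p μ → Lp ℂ p μ → ℂ) : Prop :=
  (∀ f g h : Lp ℂ p μ, Ω (f + g) h = Ω f h + Ω g h) ∧
  (∀ (c : ℂ) (f g : Lp ℂ p μ), Ω (c • f) g = c * Ω f g) ∧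
  (∀ f g h : Lp ℂ p μ, Ω f (g + h) = Ω f g + Ω f h) ∧
  (∀ (c : ℂ) (f g : Lp ℂ p μ), Ω f (c • g) = (starRingEnd ℂ) c * Ω f g) ∧
  (∀ f : Lp ℂ p μ, 0 ≤ Ω f f) ∧
  (∀ (f : Lp ℂ p μ) (φ ψ : C(X, ℂ)) (φL ψL fφ fstarψ : Lp ℂ p μ),
      (φL : X → ℂ) =ᵐ[μ] φ → (ψL : X → ℂ) =ᵐ[μ] ψ →
      (fφ : X → ℂ) =ᵐ[μ] (fun x => f x * φ x) →
      (fstarψ : X → ℂ) =ᵐ[μ] (fun x => (starRingEnd ℂ) (f x) * ψ x) →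
      Ω fφ ψL = Ω φL fstarψ) ∧
  (∀ f g : Lp ℂ p μ, ‖Ω f g‖ ≤ ‖f‖ * ‖g‖)

/-- The set `B^p_+`: nonnegative functions in `L^{p/(p-2)}` of norm at most one
(in `ℝ≥0∞`-arithmetic `p/(p-2) = ∞` when `p = 2`). -/
def MemBp {X : Type*} [MeasurableSpace X] (μ : Measure X) (p : ℝ≥0∞)
    (ψ : X → ℝ) : Prop :=
  MemLp ψ (p / (p - 2)) μ ∧ (0 ≤ᵐ[μ] ψ) ∧ eLpNorm ψ (p / (p - 2)) μ ≤ 1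

/-! For `p ≥ 2` and finite `μ`, `L^p` embeds continuously into `L^2`. Pulling the `L^2` inner
product back along this embedding, and rescaling it by `(‖ι‖² + 1)⁻¹` (`ι` the embedding) to make it contractive,
gives a form in `S(L^p)`: invariance holds because both `Ω(fφ, ψ)` and `Ω(φ, f̄ψ)` equal
`∫ f φ ψ̄ dμ` up to the scaling. Its value at `(f, f)` is a positive multiple of `‖f‖₂²`. -/

open scoped InnerProductSpace

lemma ENNReal.one_div_toReal_le_one_div_toReal {p q : ℝ≥0∞} (hq : q ≠ 0) (hqp : q ≤ p) :
    1 / p.toReal ≤ 1 / q.toReal := by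
  rcases eq_or_ne p ∞ with rfl | hp
  · simp
  · exact one_div_le_one_div_of_le (ENNReal.toReal_pos hq (hqp.trans_lt hp.lt_top).ne)
      (ENNReal.toReal_mono hp hqp)

namespace MeasureTheory.Lp

variable {α 𝕜 E : Type*} [MeasurableSpace α] {μ : Measure α} [IsFiniteMeasure μ]
  [NormedField 𝕜] [NormedAddCommGroup E] [NormedSpace 𝕜 E] {p q : ℝ≥0∞}

variable (𝕜 E μ) in
noncomputable def inclusion [Fact (1 ≤ p)] [Fact (1 ≤ q)] (hqp : q ≤ p) :
    Lp E p μ →L[𝕜] Lp E q μ :=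
  LinearMap.mkContinuous
    { toFun := AddSubgroup.inclusion (Lp.antitone hqp)
      map_add' := map_add _
      map_smul' := fun _ _ => rfl }
    (μ Set.univ ^ (1 / q.toReal - 1 / p.toReal)).toReal
    (fun f => by
      have hC : μ Set.univ ^ (1 / q.toReal - 1 / p.toReal) ≠ ∞ :=
        ENNReal.rpow_ne_top_of_nonneg (sub_nonneg.2
          (ENNReal.one_div_toReal_le_one_div_toReal (zero_lt_one.trans_le Fact.out).ne' hqp))
          (measure_ne_top μ _)
      rw [mul_comm, Lp.norm_def, Lp.norm_def, ← ENNReal.toReal_mul]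
      exact ENNReal.toReal_mono (ENNReal.mul_ne_top (Lp.eLpNorm_ne_top f) hC)
        (eLpNorm_le_eLpNorm_mul_rpow_measure_univ hqp (Lp.aestronglyMeasurable f)))

lemma coeFn_inclusion [Fact (1 ≤ p)] [Fact (1 ≤ q)] (hqp : q ≤ p) (f : Lp E p μ) :
    (inclusion 𝕜 E μ hqp f : α → E) = f := rfl

lemma inclusion_injective [Fact (1 ≤ p)] [Fact (1 ≤ q)] (hqp : q ≤ p) :
    Function.Injective (inclusion 𝕜 E μ hqp) :=
  fun _ _ h => Lp.ext (by rw [← coeFn_inclusion (𝕜 := 𝕜) hqp, h]; rfl)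

end MeasureTheory.Lp

namespace ContinuousLinearMap

variable {𝕜 E H : Type*} [RCLike 𝕜] [NormedAddCommGroup E] [NormedSpace 𝕜 E]
  [NormedAddCommGroup H] [InnerProductSpace 𝕜 H] (T : E →L[𝕜] H)

noncomputable def contractivePullbackInner (g h : E) : 𝕜 :=
  ((‖T‖ ^ 2 + 1)⁻¹ : ℝ) * ⟪T h, T g⟫_𝕜

lemma contractivePullbackInner_add_left (g g' h : E) :
    T.contractivePullbackInner (g + g') h =
      T.contractivePullbackInner g h + T.contractivePullbackInner g' h := by
  simp only [contractivePullbackInner, map_add, inner_add_right, mul_add]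

lemma contractivePullbackInner_smul_left (c : 𝕜) (g h : E) :
    T.contractivePullbackInner (c • g) h = c * T.contractivePullbackInner g h := by
  simp only [contractivePullbackInner, map_smul, inner_smul_right]
  ring

lemma contractivePullbackInner_add_right (g h h' : E) :
    T.contractivePullbackInner g (h + h') =
      T.contractivePullbackInner g h + T.contractivePullbackInner g h' := by
  simp only [contractivePullbackInner, map_add, inner_add_left, mul_add]

lemma contractivePullbackInner_smul_right (c : 𝕜) (g h : E) :
    T.contractivePullbackInner g (c • h) = starRingEnd 𝕜 c * T.contractivePullbackInner g h := by
  simp only [contractivePullbackInner, map_smul, inner_smul_left]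
  ring

lemma contractivePullbackInner_self (g : E) :
    T.contractivePullbackInner g g = (((‖T‖ ^ 2 + 1)⁻¹ * ‖T g‖ ^ 2 : ℝ) : 𝕜) := by
  rw [contractivePullbackInner, inner_self_eq_norm_sq_to_K]
  push_cast
  rfl

lemma contractivePullbackInner_self_nonneg (g : E) : 0 ≤ T.contractivePullbackInner g g := by
  rw [contractivePullbackInner_self]
  exact RCLike.ofReal_nonneg.2 (by positivity)

lemma contractivePullbackInner_self_eq_zero {g : E} :
    T.contractivePullbackInner g g = 0 ↔ T g = 0 := by
  rw [contractivePullbackInner_self, RCLike.ofReal_eq_zero, mul_eq_zero, inv_eq_zero]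
  simp [add_eq_zero_iff_of_nonneg (sq_nonneg ‖T‖) zero_le_one]

lemma norm_contractivePullbackInner_le (g h : E) :
    ‖T.contractivePullbackInner g h‖ ≤ ‖g‖ * ‖h‖ := by
  rw [contractivePullbackInner, norm_mul, RCLike.norm_ofReal, abs_of_pos (by positivity),
    inv_mul_le_iff₀ (by positivity)]
  calc ‖⟪T h, T g⟫_𝕜‖ ≤ ‖T h‖ * ‖T g‖ := norm_inner_le_norm _ _
    _ ≤ (‖T‖ * ‖h‖) * (‖T‖ * ‖g‖) := by gcongr <;> exact T.le_opNorm _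
    _ ≤ (‖T‖ ^ 2 + 1) * (‖g‖ * ‖h‖) := by nlinarith [mul_nonneg (norm_nonneg g) (norm_nonneg h)]

end ContinuousLinearMap

section
variable {X : Type*} [MeasurableSpace X] {μ : Measure X} [IsFiniteMeasure μ] {p : ℝ≥0∞}
  [Fact (1 ≤ p)]

lemma inner_inclusion_eq_integral (hp : 2 ≤ p) (g h : Lp ℂ p μ) :
    ⟪Lp.inclusion ℂ ℂ μ hp g, Lp.inclusion ℂ ℂ μ hp h⟫_ℂ = ∫ x, starRingEnd ℂ (g x) * h x ∂μ := by
  simp only [L2.inner_def, Lp.coeFn_inclusion, RCLike.inner_apply, mul_comm]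

lemma isSform_contractivePullbackInner_inclusion [TopologicalSpace X] (hp : 2 ≤ p) :
    IsSform μ p (Lp.inclusion ℂ ℂ μ hp).contractivePullbackInner := by
  set ι := Lp.inclusion ℂ ℂ μ hp
  refine ⟨ι.contractivePullbackInner_add_left, ι.contractivePullbackInner_smul_left,
    ι.contractivePullbackInner_add_right, ι.contractivePullbackInner_smul_right,
    ι.contractivePullbackInner_self_nonneg, ?_, ι.norm_contractivePullbackInner_le⟩
  intro f φ ψ φL ψL fφ fstarψ hφL hψL hfφ hfstarψ
  simp only [ContinuousLinearMap.contractivePullbackInner, ι, inner_inclusion_eq_integral]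
  congr 1
  refine integral_congr_ae ?_
  filter_upwards [hφL, hψL, hfφ, hfstarψ] with x h1 h2 h3 h4
  simp only [h1, h2, h3, h4, map_mul, conj_conj]
  ring

end

theorem lp_star_semisimple_general
    {X : Type*} [MeasurableSpace X] [TopologicalSpace X] (μ : Measure X) [IsFiniteMeasure μ]
    (p : ℝ≥0∞) (hp : 2 ≤ p)
    (f : Lp ℂ p μ)
    (hf : ∀ Ω : Lp ℂ p μ → Lp ℂ p μ → ℂ, IsSform μ p Ω → Ω f f = 0) :
    f = 0 := by
  have : Fact (1 ≤ p) := ⟨one_le_two.trans hp⟩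
  have hιf := (ContinuousLinearMap.contractivePullbackInner_self_eq_zero _).1
    (hf _ (isSform_contractivePullbackInner_inclusion hp))
  exact Lp.inclusion_injective hp (hιf.trans (map_zero _).symm)

/-- For `p ≥ 2`, the pair `(L^p(X,μ), C(X))` is `*`-semisimple:
if `Ω(f,f) = 0` for every `Ω ∈ S(L^p(X,μ))`, then `f = 0` in `L^p`. -/
theorem lp_star_semisimple
    {X : Type*} [MeasurableSpace X] [TopologicalSpace X] [CompactSpace X]
    [T2Space X] [BorelSpace X] (μ : Measure X) [IsFiniteMeasure μ]
    (p : ℝ≥0∞) (hp : 2 ≤ p) (hp' : p ≠ ∞)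
    (f : Lp ℂ p μ)
    (hf : ∀ Ω : Lp ℂ p μ → Lp ℂ p μ → ℂ, IsSform μ p Ω → Ω f f = 0) :
    f = 0 :=
  lp_star_semisimple_general μ p hp f hf
end

section
/- Let p ≥ 2. For every f ∈ L^p(X,μ) there exists Ω ∈ S(L^p(X,μ)) such that Ω(f,f) = ‖f‖_p². Explicitly, if f ≠ 0 the form Ω(g,h) = ‖f‖_p^{2-p} ∫_X g(x)·conj(h(x))·|f(x)|^{p-2} dμ(x) belongs to S(L^p(X,μ)) and satisfies Ω(f,f) = ‖f‖_p². -/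
open MeasureTheory ENNReal Complex
open scoped ComplexOrder

open Filter ComplexConjugate

/-!
For a real weight `ψ`, the form `Ω_ψ(g, h) = ∫ g h̄ ψ` is sesquilinear and invariant, positive
when `ψ ≥ 0`, and Hölder's inequality with exponents `p, p, p/(p-2)` (conjugate because
`2/p + (p-2)/p = 1`) gives `|Ω_ψ(g, h)| ≤ ‖ψ‖_{p/(p-2)} ‖g‖_p ‖h‖_p`; so `Ω_ψ ∈ S(L^p)` for
every `ψ ∈ B^p_+`. The weight `ψ_f = ‖f‖_p^{2-p} |f|^{p-2}` lies in `B^p_+` because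
`‖ |f|^{p-2} ‖_{p/(p-2)} = ‖f‖_p^{p-2}`, and `Ω_{ψ_f}(f, f) = ‖f‖_p^{2-p} ∫ |f|^p = ‖f‖_p^2`.
With `Real.rpow`'s conventions `0 ^ 0 = 1` and `0 ^ a = 0` for `a ≠ 0` this stays true for
`f = 0`, so no case distinction is needed.
-/

namespace ENNReal

instance HolderTriple.instSelfDivTwo (p : ℝ≥0∞) : HolderTriple p p (p / 2) :=
  ⟨by rw [ENNReal.inv_div (by simp) (by simp), div_eq_mul_inv, two_mul]⟩

lemma holderConjugate_div_two_div_sub_two {p : ℝ≥0∞} (hp : 2 ≤ p) (hp' : p ≠ ∞) :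
    HolderConjugate (p / 2) (p / (p - 2)) := by
  have hp₀ : p ≠ 0 := (zero_lt_two.trans_le hp).ne'
  rw [holderConjugate_iff, ENNReal.inv_div (by simp) (by simp),
    ENNReal.inv_div (.inr hp') (.inr hp₀), ENNReal.div_add_div_same,
    add_tsub_cancel_of_le hp, ENNReal.div_self hp₀ hp']

lemma toReal_sub_two_nonneg {p : ℝ≥0∞} (hp : 2 ≤ p) (hp' : p ≠ ∞) : 0 ≤ p.toReal - 2 :=
  sub_nonneg.2 (by simpa using ENNReal.toReal_mono hp' hp)

end ENNReal

lemma mul_conj_mul_eq_smul {X : Type*} (g h : X → ℂ) (ψ : X → ℝ) :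
    (fun x => g x * conj (h x) * ψ x) = ψ • fun x => g x * conj (h x) := by
  ext x
  simp [Complex.real_smul, mul_comm]

namespace MeasureTheory

lemma norm_integral_le_toReal_eLpNorm_one {X E : Type*} [MeasurableSpace X] {μ : Measure X}
    [NormedAddCommGroup E] [NormedSpace ℝ E] (F : X → E) :
    ‖∫ x, F x ∂μ‖ ≤ (eLpNorm F 1 μ).toReal := by
  simpa only [eLpNorm_one_eq_lintegral_enorm, ofReal_norm]
    using norm_integral_le_lintegral_norm F

section Holder

variable {X : Type*} [MeasurableSpace X] {μ : Measure X} {p s : ℝ≥0∞}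

lemma eLpNorm_mul_conj_le {q r : ℝ≥0∞} [HolderTriple p q r] {g h : X → ℂ}
    (hg : AEStronglyMeasurable g μ) (hh : AEStronglyMeasurable h μ) :
    eLpNorm (fun x => g x * conj (h x)) r μ ≤ eLpNorm g p μ * eLpNorm h q μ := by
  simpa using eLpNorm_le_eLpNorm_mul_eLpNorm'_of_norm hg hh (fun a b => a * conj b) 1
    (.of_forall fun x => by simp)

lemma MemLp.mul_conj {q r : ℝ≥0∞} [HolderTriple p q r] {g h : X → ℂ}
    (hg : MemLp g p μ) (hh : MemLp h q μ) : MemLp (fun x => g x * conj (h x)) r μ :=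
  ⟨hg.1.mul hh.1.star, (eLpNorm_mul_conj_le hg.1 hh.1).trans_lt
    (ENNReal.mul_lt_top hg.eLpNorm_lt_top hh.eLpNorm_lt_top)⟩

variable [HolderConjugate (p / 2) s] {ψ : X → ℝ}

lemma MemLp.mul_conj_mul {g h : X → ℂ} (hg : MemLp g p μ) (hh : MemLp h p μ)
    (hψ : MemLp ψ s μ) : MemLp (fun x => g x * conj (h x) * ψ x) 1 μ := by
  rw [mul_conj_mul_eq_smul]
  exact (hg.mul_conj (q := p) (r := p / 2) hh).smul (r := 1) hψ

lemma eLpNorm_mul_conj_mul_le {g h : X → ℂ} (hg : AEStronglyMeasurable g μ)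
    (hh : AEStronglyMeasurable h μ) (hψ : AEStronglyMeasurable ψ μ) :
    eLpNorm (fun x => g x * conj (h x) * ψ x) 1 μ ≤
      eLpNorm ψ s μ * (eLpNorm g p μ * eLpNorm h p μ) := by
  rw [mul_conj_mul_eq_smul]
  calc eLpNorm (ψ • fun x => g x * conj (h x)) 1 μ
      ≤ eLpNorm ψ s μ * eLpNorm (fun x => g x * conj (h x)) (p / 2) μ :=
        eLpNorm_smul_le_mul_eLpNorm (hg.mul hh.star) hψ
    _ ≤ eLpNorm ψ s μ * (eLpNorm g p μ * eLpNorm h p μ) := by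
        gcongr
        exact eLpNorm_mul_conj_le hg hh

end Holder

section NormRpow

variable {X E : Type*} [MeasurableSpace X] {μ : Measure X} {p : ℝ≥0∞} [NormedAddCommGroup E]

lemma eLpNorm_norm_rpow_sub_two_le (hp : 2 ≤ p) (hp' : p ≠ ∞) (f : X → E) :
    eLpNorm (fun x => ‖f x‖ ^ (p.toReal - 2)) (p / (p - 2)) μ ≤
      eLpNorm f p μ ^ (p.toReal - 2) := by
  rcases hp.eq_or_lt with rfl | hp2
  · have h1 := eLpNormEssSup_le_of_ae_bound (μ := μ) (.of_forall fun (_ : X) =>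
      (norm_one (α := ℝ)).le)
    simpa [ENNReal.div_zero, eLpNorm_exponent_top] using h1
  · have hs : 0 < p.toReal - 2 := by
      rw [sub_pos, ← ENNReal.ofReal_lt_iff_lt_toReal zero_le_two hp']
      simpa using hp2
    have hps : p / (p - 2) * ENNReal.ofReal (p.toReal - 2) = p := by
      rw [ENNReal.ofReal_sub _ zero_le_two, ENNReal.ofReal_toReal hp', ENNReal.ofReal_ofNat,
        ENNReal.div_mul_cancel (tsub_pos_of_lt hp2).ne' (by finiteness)]
    rw [eLpNorm_norm_rpow f hs, hps]

lemma MemLp.norm_rpow_sub_two (hp : 2 ≤ p) (hp' : p ≠ ∞) {f : X → E} (hf : MemLp f p μ) :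
    MemLp (fun x => ‖f x‖ ^ (p.toReal - 2)) (p / (p - 2)) μ :=
  ⟨(hf.1.norm.aemeasurable.pow_const _).aestronglyMeasurable,
    (eLpNorm_norm_rpow_sub_two_le hp hp' f).trans_lt
      (ENNReal.rpow_lt_top_of_nonneg (ENNReal.toReal_sub_two_nonneg hp hp') hf.eLpNorm_ne_top)⟩

lemma Lp.integral_norm_rpow_toReal (hp : p ≠ 0) (hp' : p ≠ ∞) (f : Lp E p μ) :
    ∫ x, ‖f x‖ ^ p.toReal ∂μ = ‖f‖ ^ p.toReal := by
  rw [Lp.norm_def, toReal_eLpNorm (Lp.aestronglyMeasurable f),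
    lpNorm_eq_integral_norm_rpow_toReal hp hp' (Lp.aestronglyMeasurable f),
    Real.rpow_inv_rpow (integral_nonneg fun x => by positivity)
      (ENNReal.toReal_ne_zero.2 ⟨hp, hp'⟩)]

end NormRpow

end MeasureTheory

section WeightedForm

variable {X : Type*} [MeasurableSpace X] {μ : Measure X} {p s : ℝ≥0∞} {ψ : X → ℝ}

noncomputable def weightedForm (μ : Measure X) (p : ℝ≥0∞) (ψ : X → ℝ) (g h : Lp ℂ p μ) : ℂ :=
  ∫ x, g x * conj (h x) * ψ x ∂μ

lemma weightedForm_congr {g h g' h' : Lp ℂ p μ}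
    (hgh : (fun x => g x * conj (h x)) =ᵐ[μ] fun x => g' x * conj (h' x)) :
    weightedForm μ p ψ g h = weightedForm μ p ψ g' h' :=
  integral_congr_ae (hgh.mono fun x hx => by simp only [hx])

lemma weightedForm_smul_left (c : ℂ) (g h : Lp ℂ p μ) :
    weightedForm μ p ψ (c • g) h = c * weightedForm μ p ψ g h := by
  rw [weightedForm, weightedForm, ← integral_const_mul]
  refine integral_congr_ae ((Lp.coeFn_smul c g).mono fun x hx => ?_)
  simp only [hx, Pi.smul_apply, smul_eq_mul, mul_assoc]

lemma weightedForm_smul_right (c : ℂ) (g h : Lp ℂ p μ) :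
    weightedForm μ p ψ g (c • h) = conj c * weightedForm μ p ψ g h := by
  rw [weightedForm, weightedForm, ← integral_const_mul]
  refine integral_congr_ae ((Lp.coeFn_smul c h).mono fun x hx => ?_)
  simp only [hx, Pi.smul_apply, smul_eq_mul, map_mul]
  ring

lemma weightedForm_self_nonneg (hψ : 0 ≤ᵐ[μ] ψ) (g : Lp ℂ p μ) :
    0 ≤ weightedForm μ p ψ g g := by
  have hreal : weightedForm μ p ψ g g = ((∫ x, Complex.normSq (g x) * ψ x ∂μ : ℝ) : ℂ) := by
    rw [← integral_complex_ofReal, weightedForm]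
    simp only [Complex.mul_conj, Complex.ofReal_mul]
  rw [hreal, Complex.zero_le_real]
  exact integral_nonneg_of_ae (hψ.mono fun x hx => mul_nonneg (Complex.normSq_nonneg _) hx)

variable [HolderConjugate (p / 2) s]

lemma weightedForm_add_left (hψ : MemLp ψ s μ) (g₁ g₂ h : Lp ℂ p μ) :
    weightedForm μ p ψ (g₁ + g₂) h = weightedForm μ p ψ g₁ h + weightedForm μ p ψ g₂ h := by
  rw [weightedForm, weightedForm, weightedForm, ← integral_add
    (memLp_one_iff_integrable.1 ((Lp.memLp g₁).mul_conj_mul (Lp.memLp h) hψ))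
    (memLp_one_iff_integrable.1 ((Lp.memLp g₂).mul_conj_mul (Lp.memLp h) hψ))]
  refine integral_congr_ae ((Lp.coeFn_add g₁ g₂).mono fun x hx => ?_)
  simp only [hx, Pi.add_apply]
  ring

lemma weightedForm_add_right (hψ : MemLp ψ s μ) (g h₁ h₂ : Lp ℂ p μ) :
    weightedForm μ p ψ g (h₁ + h₂) = weightedForm μ p ψ g h₁ + weightedForm μ p ψ g h₂ := by
  rw [weightedForm, weightedForm, weightedForm, ← integral_add
    (memLp_one_iff_integrable.1 ((Lp.memLp g).mul_conj_mul (Lp.memLp h₁) hψ))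
    (memLp_one_iff_integrable.1 ((Lp.memLp g).mul_conj_mul (Lp.memLp h₂) hψ))]
  refine integral_congr_ae ((Lp.coeFn_add h₁ h₂).mono fun x hx => ?_)
  simp only [hx, Pi.add_apply, map_add]
  ring

lemma norm_weightedForm_le (hψ : MemLp ψ s μ) (g h : Lp ℂ p μ) :
    ‖weightedForm μ p ψ g h‖ ≤ (eLpNorm ψ s μ).toReal * (‖g‖ * ‖h‖) := by
  rw [Lp.norm_def, Lp.norm_def, ← ENNReal.toReal_mul, ← ENNReal.toReal_mul]
  refine (norm_integral_le_toReal_eLpNorm_one _).trans (ENNReal.toReal_mono ?_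
    (eLpNorm_mul_conj_mul_le (Lp.aestronglyMeasurable g) (Lp.aestronglyMeasurable h) hψ.1))
  finiteness [hψ.eLpNorm_ne_top, Lp.eLpNorm_ne_top g, Lp.eLpNorm_ne_top h]

theorem isSform_weightedForm [TopologicalSpace X] (hψ : MemLp ψ s μ) (hψ₀ : 0 ≤ᵐ[μ] ψ)
    (hψ₁ : eLpNorm ψ s μ ≤ 1) : IsSform μ p (weightedForm μ p ψ) := by
  refine ⟨weightedForm_add_left hψ, weightedForm_smul_left, weightedForm_add_right hψ,
    weightedForm_smul_right, weightedForm_self_nonneg hψ₀, ?_, fun g h => ?_⟩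
  · intro f φ ψ φL ψL fφ fstarψ hφL hψL hfφ hfstarψ
    refine weightedForm_congr ?_
    filter_upwards [hφL, hψL, hfφ, hfstarψ] with x h₁ h₂ h₃ h₄
    simp only [h₁, h₂, h₃, h₄, map_mul, Complex.conj_conj]
    ring
  · calc ‖weightedForm μ p ψ g h‖ ≤ (eLpNorm ψ s μ).toReal * (‖g‖ * ‖h‖) :=
          norm_weightedForm_le hψ g h
      _ ≤ ‖g‖ * ‖h‖ := by
          refine mul_le_of_le_one_left (mul_nonneg ENNReal.toReal_nonneg ENNReal.toReal_nonneg) ?_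
          exact ENNReal.toReal_le_of_le_ofReal zero_le_one (by simpa using hψ₁)

end WeightedForm

theorem isSform_weightedForm_of_memBp {X : Type*} [MeasurableSpace X] [TopologicalSpace X]
    {μ : Measure X} {p : ℝ≥0∞} (hp : 2 ≤ p) (hp' : p ≠ ∞) {ψ : X → ℝ} (hψ : MemBp μ p ψ) :
    IsSform μ p (weightedForm μ p ψ) :=
  have := ENNReal.holderConjugate_div_two_div_sub_two hp hp'
  isSform_weightedForm hψ.1 hψ.2.1 hψ.2.2

section NormingWeight

variable {X E : Type*} [MeasurableSpace X] {μ : Measure X} {p : ℝ≥0∞} [NormedAddCommGroup E]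

noncomputable def normingWeight (f : Lp E p μ) (x : X) : ℝ :=
  ‖f‖ ^ (2 - p.toReal) * ‖f x‖ ^ (p.toReal - 2)

lemma memBp_normingWeight (hp : 2 ≤ p) (hp' : p ≠ ∞) (f : Lp E p μ) :
    MemBp μ p (normingWeight f) := by
  have hf₀ : 0 ≤ ‖f‖ := ENNReal.toReal_nonneg
  have hs := ENNReal.toReal_sub_two_nonneg hp hp'
  refine ⟨((Lp.memLp f).norm_rpow_sub_two hp hp').const_mul _, .of_forall fun x =>
    mul_nonneg (Real.rpow_nonneg hf₀ _) (Real.rpow_nonneg (norm_nonneg _) _), ?_⟩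
  have hw : normingWeight f = ‖f‖ ^ (2 - p.toReal) • fun x => ‖f x‖ ^ (p.toReal - 2) := rfl
  calc eLpNorm (normingWeight f) (p / (p - 2)) μ
      = ‖‖f‖ ^ (2 - p.toReal)‖ₑ *
          eLpNorm (fun x => ‖f x‖ ^ (p.toReal - 2)) (p / (p - 2)) μ := by
        rw [hw, eLpNorm_const_smul]
    _ ≤ ENNReal.ofReal (‖f‖ ^ (2 - p.toReal)) * ENNReal.ofReal ‖f‖ ^ (p.toReal - 2) := by
        rw [Real.enorm_of_nonneg (by positivity), Lp.norm_def,
          ENNReal.ofReal_toReal (Lp.eLpNorm_ne_top f)]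
        gcongr
        exact eLpNorm_norm_rpow_sub_two_le hp hp' f
    _ = ENNReal.ofReal ((‖f‖ ^ (p.toReal - 2))⁻¹ * ‖f‖ ^ (p.toReal - 2)) := by
        rw [ENNReal.ofReal_mul (by positivity), ENNReal.ofReal_rpow_of_nonneg hf₀ hs,
          ← Real.rpow_neg hf₀, neg_sub]
    _ ≤ 1 := ENNReal.ofReal_le_one.2 inv_mul_le_one

end NormingWeight

lemma weightedForm_normingWeight_self {X : Type*} [MeasurableSpace X] {μ : Measure X}
    {p : ℝ≥0∞} (hp : p ≠ 0) (hp' : p ≠ ∞) (f : Lp ℂ p μ) :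
    weightedForm μ p (normingWeight f) f f = ((‖f‖ ^ 2 : ℝ) : ℂ) := by
  have hf₀ : 0 ≤ ‖f‖ := ENNReal.toReal_nonneg
  have hq : p.toReal ≠ 0 := ENNReal.toReal_ne_zero.2 ⟨hp, hp'⟩
  calc weightedForm μ p (normingWeight f) f f
      = ∫ x, ((‖f‖ ^ (2 - p.toReal) * ‖f x‖ ^ p.toReal : ℝ) : ℂ) ∂μ := by
        refine integral_congr_ae (.of_forall fun x => ?_)
        dsimp only
        rw [Complex.mul_conj, Complex.normSq_eq_norm_sq, normingWeight,
          ← Complex.ofReal_mul, mul_left_comm, ← Real.rpow_two,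
          ← Real.rpow_add' (norm_nonneg _) (by simpa using hq), add_sub_cancel]
    _ = ((‖f‖ ^ (2 - p.toReal) * ‖f‖ ^ p.toReal : ℝ) : ℂ) := by
        rw [integral_complex_ofReal, integral_const_mul, Lp.integral_norm_rpow_toReal hp hp']
    _ = ((‖f‖ ^ 2 : ℝ) : ℂ) := by
        rw [← Real.rpow_add' hf₀ (by simp), sub_add_cancel, Real.rpow_two]

theorem sform_attaining_norm_general
    {X : Type*} [MeasurableSpace X] [TopologicalSpace X]
    (μ : Measure X)
    (p : ℝ≥0∞) (hp : 2 ≤ p) (hp' : p ≠ ∞) (f : Lp ℂ p μ) :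
    (∃ Ω : Lp ℂ p μ → Lp ℂ p μ → ℂ,
        IsSform μ p Ω ∧ Ω f f = ((‖f‖ ^ 2 : ℝ) : ℂ)) ∧
    (f ≠ 0 →
      IsSform μ p
        (fun g h : Lp ℂ p μ =>
          ((‖f‖ ^ (2 - p.toReal) : ℝ) : ℂ) *
            ∫ x, g x * (starRingEnd ℂ) (h x) *
              ((‖f x‖ ^ (p.toReal - 2) : ℝ) : ℂ) ∂μ) ∧
      ((‖f‖ ^ (2 - p.toReal) : ℝ) : ℂ) *
          ∫ x, f x * (starRingEnd ℂ) (f x) *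
            ((‖f x‖ ^ (p.toReal - 2) : ℝ) : ℂ) ∂μ = ((‖f‖ ^ 2 : ℝ) : ℂ)) := by
  have hΩ : (fun g h : Lp ℂ p μ => ((‖f‖ ^ (2 - p.toReal) : ℝ) : ℂ) *
      ∫ x, g x * (starRingEnd ℂ) (h x) * ((‖f x‖ ^ (p.toReal - 2) : ℝ) : ℂ) ∂μ) =
      weightedForm μ p (normingWeight f) := by
    ext g h
    rw [weightedForm, ← integral_const_mul]
    congr 1 with x
    simp only [normingWeight, Complex.ofReal_mul]
    ring
  have hS := isSform_weightedForm_of_memBp hp hp' (memBp_normingWeight hp hp' f)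
  have hval := weightedForm_normingWeight_self (zero_lt_two.trans_le hp).ne' hp' f
  rw [hΩ]
  exact ⟨⟨_, hS, hval⟩, fun _ => ⟨hS, (congrFun₂ hΩ f f).trans hval⟩⟩

/-- For `p ≥ 2`, every `f ∈ L^p(X,μ)` admits a form
`Ω ∈ S(L^p(X,μ))` with `Ω(f,f) = ‖f‖_p²`; explicitly, for `f ≠ 0` the form
`Ω(g,h) = ‖f‖_p^{2-p} ∫ g h̄ |f|^{p-2} dμ` belongs to `S(L^p(X,μ))` and
satisfies `Ω(f,f) = ‖f‖_p²`. -/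
theorem sform_attaining_norm
    {X : Type*} [MeasurableSpace X] [TopologicalSpace X] [CompactSpace X]
    [T2Space X] [BorelSpace X] (μ : Measure X) [IsFiniteMeasure μ]
    (p : ℝ≥0∞) (hp : 2 ≤ p) (hp' : p ≠ ∞) (f : Lp ℂ p μ) :
    (∃ Ω : Lp ℂ p μ → Lp ℂ p μ → ℂ,
        IsSform μ p Ω ∧ Ω f f = ((‖f‖ ^ 2 : ℝ) : ℂ)) ∧
    (f ≠ 0 →
      IsSform μ p
        (fun g h : Lp ℂ p μ =>
          ((‖f‖ ^ (2 - p.toReal) : ℝ) : ℂ) *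
            ∫ x, g x * (starRingEnd ℂ) (h x) *
              ((‖f x‖ ^ (p.toReal - 2) : ℝ) : ℂ) ∂μ) ∧
      ((‖f‖ ^ (2 - p.toReal) : ℝ) : ℂ) *
          ∫ x, f x * (starRingEnd ℂ) (f x) *
            ((‖f x‖ ^ (p.toReal - 2) : ℝ) : ℂ) ∂μ = ((‖f‖ ^ 2 : ℝ) : ℂ)) :=
  sform_attaining_norm_general μ p hp hp' f
end

section
/- Let X be a locally compact Hausdorff space, μ a regular Borel measure on X, 1 < p < ∞, and f, g ∈ L^p(X,μ). Then the pointwise product f·g belongs to L^p(X,μ) if, and only if, there exists a sequence (g_n) in C_0(X) such that g_n → g in L^p(X,μ) and the sequence (f·g_n) converges in L^p(X,μ); in that case the limit of (f·g_n) is f·g. -/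
/-!
If `f * g ∈ Lᵖ(μ)`, consider the finite measure `ν = |f|ᵖ μ`. It is uniformly absolutely
continuous with respect to `μ`, so `μ + ν` is again regular, and `g ∈ Lᵖ(μ + ν)` because
`‖u‖_{Lᵖ(ν)} = ‖f u‖_{Lᵖ(μ)}`. A compactly supported continuous `φ` close to `g` in
`Lᵖ(μ + ν)` is therefore close to `g` in `Lᵖ(μ)` and makes `f φ` close to `f g` in `Lᵖ(μ)`.

Conversely, `Lᵖ` convergence implies convergence in measure, so along a subsequence `gₙ → g`
almost everywhere, hence `f gₙ → f g` almost everywhere, and the `Lᵖ` limit of `f gₙ` must be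
`f g`.
-/

open MeasureTheory ENNReal Filter Topology
open scoped ZeroAtInfty

namespace MeasureTheory

instance isFiniteMeasureOnCompacts_add {X : Type*} [MeasurableSpace X] [TopologicalSpace X]
    {μ ν : Measure X} [IsFiniteMeasureOnCompacts μ] [IsFiniteMeasureOnCompacts ν] :
    IsFiniteMeasureOnCompacts (μ + ν) :=
  ⟨fun _ hK => ENNReal.add_lt_top.2 ⟨hK.measure_lt_top, hK.measure_lt_top⟩⟩

namespace Measure

variable {X : Type*} [MeasurableSpace X] [TopologicalSpace X] [OpensMeasurableSpace X]
  {μ ρ : Measure X}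

theorem outerRegular_of_le_of_forall_measure_lt [μ.OuterRegular] (hμρ : μ ≤ ρ)
    (hsmall : ∀ ε ≠ 0, ∃ δ ≠ 0, ∀ s, MeasurableSet s → μ s < δ → ρ s < ε) :
    ρ.OuterRegular := by
  refine ⟨fun A hA r hr => ?_⟩
  obtain ⟨ε, hε, hεr⟩ := ENNReal.lt_iff_exists_add_pos_lt.1 hr
  obtain ⟨δ, hδ, hρδ⟩ := hsmall ε (by exact_mod_cast hε.ne')
  obtain ⟨U, hAU, hU, -, hUA⟩ := hA.exists_isOpen_sdiff_lt ((hμρ A).trans_lt hr).ne_top hδ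
  refine ⟨U, hAU, hU, ?_⟩
  calc ρ U ≤ ρ A + ρ (U \ A) := by
        simpa [Set.inter_eq_right.2 hAU] using measure_le_inter_add_sdiff ρ U A
    _ < ρ A + ε := ENNReal.add_lt_add_left hr.ne_top (hρδ _ (hU.measurableSet.diff hA) hUA)
    _ < r := hεr

theorem innerRegular_of_le_of_forall_measure_lt [T2Space X] [μ.Regular] (hμρ : μ ≤ ρ)
    (hsmall : ∀ ε ≠ 0, ∃ δ ≠ 0, ∀ s, MeasurableSet s → μ s < δ → ρ s < ε) :
    ρ.InnerRegularWRT IsCompact IsOpen := by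
  intro U hU r hr
  rcases lt_or_ge r (μ U) with hrμ | hμr
  · obtain ⟨K, hKU, hK, hrK⟩ := Regular.innerRegular hU r hrμ
    exact ⟨K, hKU, hK, hrK.trans_le (hμρ K)⟩
  obtain ⟨ε, hε, hεr⟩ := ENNReal.lt_iff_exists_add_pos_lt.1 hr
  obtain ⟨δ, hδ, hρδ⟩ := hsmall ε (by exact_mod_cast hε.ne')
  obtain ⟨K, hKU, hK, hUK⟩ :=
    hU.measurableSet.exists_isCompact_sdiff_lt (hμr.trans_lt hr).ne_top hδ
  refine ⟨K, hKU, hK, (ENNReal.add_lt_add_iff_right coe_ne_top).1 (?_ : r + ε < ρ K + ε)⟩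
  calc r + ε < ρ U := hεr
    _ ≤ ρ K + ρ (U \ K) := by
        simpa [Set.inter_eq_right.2 hKU] using measure_le_inter_add_sdiff ρ U K
    _ ≤ ρ K + ε := by
        gcongr
        exact (hρδ _ (hU.measurableSet.diff hK.measurableSet) hUK).le

theorem regular_of_le_of_forall_measure_lt [T2Space X] [μ.Regular]
    [IsFiniteMeasureOnCompacts ρ] (hμρ : μ ≤ ρ)
    (hsmall : ∀ ε ≠ 0, ∃ δ ≠ 0, ∀ s, MeasurableSet s → μ s < δ → ρ s < ε) : ρ.Regular :=
  have := outerRegular_of_le_of_forall_measure_lt hμρ hsmall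
  ⟨innerRegular_of_le_of_forall_measure_lt hμρ hsmall⟩

end Measure

variable {X : Type*} [MeasurableSpace X] {μ ν : Measure X} {p : ℝ≥0∞}

theorem MemLp.add_measure {E : Type*} [NormedAddCommGroup E] {f : X → E} (hp : p ≠ ∞)
    (hμ : MemLp f p μ) (hν : MemLp f p ν) : MemLp f p (μ + ν) := by
  rcases eq_or_ne p 0 with rfl | hp0
  · exact memLp_zero_iff_aestronglyMeasurable.2 (hμ.1.add_measure hν.1)
  refine ⟨hμ.1.add_measure hν.1, ?_⟩
  rw [eLpNorm_lt_top_iff_lintegral_rpow_enorm_lt_top hp0 hp, lintegral_add_measure]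
  exact ENNReal.add_lt_top.2 ⟨lintegral_rpow_enorm_lt_top_of_eLpNorm_lt_top hp0 hp hμ.2,
    lintegral_rpow_enorm_lt_top_of_eLpNorm_lt_top hp0 hp hν.2⟩

theorem exists_add_withDensity_lt_of_measure_lt {w : X → ℝ≥0∞} (hw : ∫⁻ x, w x ∂μ ≠ ∞)
    {ε : ℝ≥0∞} (hε : ε ≠ 0) :
    ∃ δ ≠ 0, ∀ s, MeasurableSet s → μ s < δ → (μ + μ.withDensity w) s < ε := by
  obtain ⟨δ, hδ, hwδ⟩ := exists_pos_setLIntegral_lt_of_measure_lt hw (ENNReal.half_pos hε).ne'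
  refine ⟨min δ (ε / 2), (lt_min hδ (ENNReal.half_pos hε)).ne', fun s hs hμs => ?_⟩
  calc (μ + μ.withDensity w) s = μ s + ∫⁻ x in s, w x ∂μ := by
        rw [Measure.add_apply, withDensity_apply w hs]
    _ < ε / 2 + ε / 2 := ENNReal.add_lt_add (hμs.trans_le (min_le_right _ _))
        (hwδ s (hμs.trans_le (min_le_left _ _)))
    _ = ε := ENNReal.add_halves ε

theorem TendstoInMeasure.ae_eq_mul_of_tendstoInMeasure_mul {R : Type*} [NormedRing R]
    {f g h : X → R} {gn : ℕ → X → R} (hg : TendstoInMeasure μ gn atTop g)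
    (hfg : TendstoInMeasure μ (fun n => f * gn n) atTop h) : h =ᵐ[μ] f * g := by
  obtain ⟨ns, hns, hg_ae⟩ := hg.exists_seq_tendsto_ae
  obtain ⟨ms, hms, hfg_ae⟩ := (hfg.comp hns.tendsto_atTop).exists_seq_tendsto_ae
  filter_upwards [hg_ae, hfg_ae] with x hgx hfgx
  exact tendsto_nhds_unique hfgx ((hgx.comp hms.tendsto_atTop).const_mul (f x))

variable {𝕜 : Type*} [RCLike 𝕜]

theorem eLpNorm_withDensity_enorm_rpow (hp0 : p ≠ 0) (hp : p ≠ ∞) {f u : X → 𝕜}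
    (hf : AEStronglyMeasurable f μ) (hu : AEStronglyMeasurable u μ) :
    eLpNorm u p (μ.withDensity fun x => ‖f x‖ₑ ^ p.toReal) = eLpNorm (f * u) p μ := by
  simp only [eLpNorm_eq_lintegral_rpow_enorm_toReal hp0 hp]
  rw [lintegral_withDensity_eq_lintegral_mul₀ (hf.enorm.pow_const _) (hu.enorm.pow_const _)]
  simp only [Pi.mul_apply, enorm_mul, ENNReal.mul_rpow_of_nonneg _ _ ENNReal.toReal_nonneg]

variable [TopologicalSpace X] [T2Space X] [LocallyCompactSpace X] [BorelSpace X] [μ.Regular]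

section Density

variable {E : Type*} [NormedAddCommGroup E] [NormedSpace ℝ E]

theorem exists_continuous_hasCompactSupport_eLpNorm_sub_indicator_le (hp : p ≠ ∞) (c : E)
    {s : Set X} (hs : MeasurableSet s) (hμs : μ s ≠ ∞) {ε : ℝ≥0∞} (hε : ε ≠ 0) :
    ∃ ψ : X → E, eLpNorm (ψ - s.indicator fun _ => c) p μ ≤ ε ∧ Continuous ψ ∧
      HasCompactSupport ψ := by
  obtain ⟨η, hη, hηε⟩ := exists_eLpNorm_indicator_le (μ := μ) hp c hε
  have hη2 : (η : ℝ≥0∞) / 2 ≠ 0 := by simpa using hη.ne'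
  obtain ⟨K, hKs, hK, hsK⟩ := hs.exists_isCompact_sdiff_lt hμs hη2
  obtain ⟨U, hsU, hU, -, hUs⟩ := hs.exists_isOpen_sdiff_lt hμs hη2
  obtain ⟨φ, hφK, hφU, hφc, hφ01⟩ := exists_continuous_one_zero_of_isCompact hK
    hU.isClosed_compl (Set.disjoint_compl_right_iff_subset.2 (hKs.trans hsU))
  have hUK : μ (U \ K) ≤ η := calc
    μ (U \ K) ≤ μ (U \ s ∪ s \ K) := measure_mono (sdiff_triangle U s K)
    _ ≤ μ (U \ s) + μ (s \ K) := measure_union_le _ _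
    _ ≤ η / 2 + η / 2 := add_le_add hUs.le hsK.le
    _ = η := ENNReal.add_halves _
  have hbound (x : X) : ‖φ x • c - s.indicator (fun _ => c) x‖ ≤
      ‖(U \ K).indicator (fun _ => c) x‖ := by
    by_cases hxK : x ∈ K
    · simp [hφK hxK, hKs hxK]
    by_cases hxU : x ∈ U
    swap
    · have hxs : x ∉ s := fun hxs => hxU (hsU hxs)
      simp [hφU hxU, hxs]
    rw [Set.indicator_of_mem (show x ∈ U \ K from ⟨hxU, hxK⟩)]
    have hc (t : ℝ) (ht : |t| ≤ 1) : ‖t • c‖ ≤ ‖c‖ := by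
      rw [norm_smul, Real.norm_eq_abs]
      exact mul_le_of_le_one_left (norm_nonneg _) ht
    obtain ⟨h0, h1⟩ := hφ01 x
    by_cases hxs : x ∈ s
    · simpa [hxs, sub_smul] using hc (φ x - 1) (abs_le.2 ⟨by linarith, by linarith⟩)
    · simpa [hxs] using hc (φ x) (abs_le.2 ⟨by linarith, by linarith⟩)
  exact ⟨fun x => φ x • c, (eLpNorm_mono hbound).trans (hηε _ hUK),
    φ.continuous.smul continuous_const, hφc.smul_right (f' := fun _ => c)⟩

theorem MemLp.exists_continuous_hasCompactSupport_eLpNorm_sub_le (hp : p ≠ ∞) {f : X → E}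
    (hf : MemLp f p μ) {ε : ℝ≥0∞} (hε : ε ≠ 0) :
    ∃ ψ : X → E, eLpNorm (f - ψ) p μ ≤ ε ∧ Continuous ψ ∧ HasCompactSupport ψ := by
  refine hf.induction_dense hp (fun ψ => Continuous ψ ∧ HasCompactSupport ψ) ?_ ?_ ?_ hε
  · intro c s hs hμs ε hε
    exact exists_continuous_hasCompactSupport_eLpNorm_sub_indicator_le hp c hs hμs.ne hε
  · exact fun _ _ hu hv => ⟨hu.1.add hv.1, hu.2.add hv.2⟩
  · exact fun _ hu => (hu.1.stronglyMeasurable_of_hasCompactSupport hu.2).aestronglyMeasurable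

end Density

theorem exists_continuous_hasCompactSupport_eLpNorm_sub_le_and_eLpNorm_mul_sub_le
    (hp0 : p ≠ 0) (hp : p ≠ ∞) {f g : X → 𝕜} (hf : MemLp f p μ) (hg : MemLp g p μ)
    (hfg : MemLp (f * g) p μ) {ε : ℝ≥0∞} (hε : ε ≠ 0) :
    ∃ φ : X → 𝕜, Continuous φ ∧ HasCompactSupport φ ∧
      eLpNorm (g - φ) p μ ≤ ε ∧ eLpNorm (f * (g - φ)) p μ ≤ ε := by
  set ν := μ.withDensity fun x => ‖f x‖ₑ ^ p.toReal
  have hν (u : X → 𝕜) (hu : AEStronglyMeasurable u μ) : eLpNorm u p ν = eLpNorm (f * u) p μ :=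
    eLpNorm_withDensity_enorm_rpow hp0 hp hf.1 hu
  have hw := (lintegral_rpow_enorm_lt_top_of_eLpNorm_lt_top hp0 hp hf.2).ne
  have : IsFiniteMeasure ν := isFiniteMeasure_withDensity hw
  have : (μ + ν).Regular := Measure.regular_of_le_of_forall_measure_lt
    (Measure.le_add_right le_rfl) fun _ hε => exists_add_withDensity_lt_of_measure_lt hw hε
  have hgν : MemLp g p ν :=
    ⟨hg.1.mono_ac (withDensity_absolutelyContinuous _ _), (hν g hg.1).trans_lt hfg.2⟩
  obtain ⟨φ, hgφ, hφ, hφc⟩ :=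
    (hg.add_measure hp hgν).exists_continuous_hasCompactSupport_eLpNorm_sub_le hp hε
  refine ⟨φ, hφ, hφc, (eLpNorm_mono_measure _ (Measure.le_add_right le_rfl)).trans hgφ, ?_⟩
  rw [← hν _ (hg.1.sub hφ.aestronglyMeasurable)]
  exact (eLpNorm_mono_measure _ (Measure.le_add_left le_rfl)).trans hgφ

end MeasureTheory

open MeasureTheory

/-- Let `X` be locally compact Hausdorff with regular Borel
measure `μ`, `1 < p < ∞`, and `f, g ∈ L^p(X,μ)`. Then `f·g ∈ L^p(X,μ)` if and
only if there is a sequence `(g_n) ⊂ C₀(X)` with `g_n → g` in `L^p` such that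
`(f·g_n)` converges in `L^p`; in that case the limit of `(f·g_n)` is `f·g`. -/
theorem mul_mem_lp_iff_approx
    {X : Type*} [MeasurableSpace X] [TopologicalSpace X] [LocallyCompactSpace X]
    [T2Space X] [BorelSpace X] (μ : Measure X) [μ.Regular]
    (p : ℝ≥0∞) (hp1 : 1 < p) (hp2 : p ≠ ∞)
    (f g : X → ℂ) (hf : MemLp f p μ) (hg : MemLp g p μ) :
    (MemLp (fun x => f x * g x) p μ ↔
      ∃ gn : ℕ → C₀(X, ℂ),
        Tendsto (fun n => eLpNorm (fun x => g x - gn n x) p μ) atTop (𝓝 0) ∧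
        ∃ h : X → ℂ, MemLp h p μ ∧
          Tendsto (fun n => eLpNorm (fun x => f x * gn n x - h x) p μ)
            atTop (𝓝 0)) ∧
    ∀ (gn : ℕ → C₀(X, ℂ)) (h : X → ℂ), MemLp h p μ →
      Tendsto (fun n => eLpNorm (fun x => g x - gn n x) p μ) atTop (𝓝 0) →
      Tendsto (fun n => eLpNorm (fun x => f x * gn n x - h x) p μ)
        atTop (𝓝 0) →
      h =ᵐ[μ] fun x => f x * g x := by
  have hp0 : p ≠ 0 := (zero_lt_one.trans hp1).ne'
  have limit_eq (gn : ℕ → C₀(X, ℂ)) (h : X → ℂ) (hh : MemLp h p μ)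
      (hg_lim : Tendsto (fun n => eLpNorm (fun x => g x - gn n x) p μ) atTop (𝓝 0))
      (hfg_lim : Tendsto (fun n => eLpNorm (fun x => f x * gn n x - h x) p μ) atTop (𝓝 0)) :
      h =ᵐ[μ] fun x => f x * g x := by
    have hgn n := (gn n).continuous.aestronglyMeasurable (μ := μ)
    refine TendstoInMeasure.ae_eq_mul_of_tendstoInMeasure_mul (gn := fun n => gn n) ?_
      (tendstoInMeasure_of_tendsto_eLpNorm hp0 (fun n => hf.1.mul (hgn n)) hh.1 hfg_lim)
    refine tendstoInMeasure_of_tendsto_eLpNorm hp0 hgn hg.1 ?_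
    convert hg_lim using 2 with n
    exact eLpNorm_sub_comm _ _ _ _
  refine ⟨⟨fun hfg => ?_, fun ⟨gn, hg_lim, h, hh, hfg_lim⟩ =>
    hh.ae_eq (limit_eq gn h hh hg_lim hfg_lim)⟩, limit_eq⟩
  choose φ hφ hφc hgφ hfgφ using fun n : ℕ =>
    exists_continuous_hasCompactSupport_eLpNorm_sub_le_and_eLpNorm_mul_sub_le hp0 hp2 hf hg hfg
      (ε := (n : ℝ≥0∞)⁻¹) (by simp)
  have squeeze {a : ℕ → ℝ≥0∞} (ha : ∀ n, a n ≤ (n : ℝ≥0∞)⁻¹) : Tendsto a atTop (𝓝 0) :=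
    tendsto_of_tendsto_of_tendsto_of_le_of_le tendsto_const_nhds
      ENNReal.tendsto_inv_nat_nhds_zero (fun _ => zero_le) ha
  refine ⟨fun n => ⟨⟨φ n, hφ n⟩, (hφc n).is_zero_at_infty⟩, squeeze hgφ, _, hfg,
    squeeze fun n => le_of_eq_of_le ?_ (hfgφ n)⟩
  rw [← eLpNorm_neg]
  congr 1
  ext x
  simp [mul_sub]
end
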